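/- Let q > 0 and suppose two proper paths m and n for q satisfy c(q,m) = c(q,n). Then there exists a proper loop u for q such that m equals the zero-skipped composition (un)*. The loop u is the trivial loop (0) if and only if m = n. -/

import Mathlib

noncomputable def cfRev (q : ℝ) : List ℤ → ℝ
  | [] => 0
  | [a] => (a : ℝ)
  | a :: b :: rest => (a : ℝ) + 1 / (q * cfRev q (b :: rest))

/-- `cf q [m₀, …, m_k]` is the continued fraction `m_k + 1/(q m_{k-1} + q/( … + q/(q m₀)))`. -/
noncomputable def cf (q : ℝ) (l : List ℤ) : ℝ := cfRev q l.reverse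

/-- `l` is a path for `q`: all denominators nonzero, i.e. every proper nonempty prefix
has nonzero continued-fraction value. -/
def IsPath (q : ℝ) (l : List ℤ) : Prop :=
  l ≠ [] ∧ ∀ t : List ℤ, t ≠ [] → t <+: l → t.length < l.length → cf q t ≠ 0

/-- all entries except possibly the last are nonzero -/
def IsProper (l : List ℤ) : Prop := ∀ i, i + 1 < l.length → l.getD i 0 ≠ 0

def IsLoop (q : ℝ) (l : List ℤ) : Prop := IsPath q l ∧ cf q l = 0

/-- the weight `q^{k/2} ∏_{j<k} |c(q, m_j)|`. -/
noncomputable def weight (q : ℝ) (l : List ℤ) : ℝ :=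
  Real.sqrt (q ^ (l.length - 1)) * ∏ j ∈ Finset.range (l.length - 1), |cf q (l.take (j + 1))|

/-- composition of paths -/
def comp (m n : List ℤ) : List ℤ := m.dropLast ++ (m.getLastD 0 + n.headD 0) :: n.tail

/-- one step of zero-skipping -/
def SkipStep (l l' : List ℤ) : Prop :=
  ∃ (u v : List ℤ) (x y : ℤ), l = u ++ x :: 0 :: y :: v ∧ l' = u ++ (x + y) :: v

/-- the weight `w_q` is unique -/
def WeightUnique (q : ℝ) : Prop :=
  ∀ m n : List ℤ, IsPath q m → IsProper m → IsPath q n → IsProper n →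
    cf q m = cf q n → weight q m = weight q n

/-!
Write `m = A ++ [a]` and `n = B ++ [b]`. Since `c(q, l ++ [x]) = x + 1/(q·c(q, l))`, equal last
entries force `c(q, A) = c(q, B)` and we recurse on the shorter paths. Otherwise
`u = A ++ [a - b] ++ (-B)ʳᵉᵛ` is a loop: each appended entry `-c` turns `c(q, s) = 1/(q·c(q, B'c))`
into `c(q, s ++ [-c]) = 1/(q·c(q, B'))`, undoing `n` one entry at a time. Composing `u` with `n`
produces `…, a - b, -cₖ, …, -c₁, 0, c₁, …, cₖ, b`, which zero-skipping folds back to `A ++ [a]`.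
-/

open Relation

section

variable {q : ℝ}

lemma cf_singleton (x : ℤ) : cf q [x] = x := rfl

lemma cf_append_singleton (l : List ℤ) (x : ℤ) :
    cf q (l ++ [x]) = x + cf q (l ++ [0]) := by
  cases h : l.reverse <;> simp [cf, h, cfRev]

lemma cf_append_zero {l : List ℤ} (hl : l ≠ []) : cf q (l ++ [0]) = (q * cf q l)⁻¹ := by
  obtain ⟨b, r, h⟩ := List.exists_cons_of_ne_nil (List.reverse_ne_nil_iff.mpr hl)
  simp [cf, h, cfRev]

lemma isPath_append_singleton_iff {l : List ℤ} {x : ℤ} :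
    IsPath q (l ++ [x]) ↔ ∀ t, t ≠ [] → t <+: l → cf q t ≠ 0 := by
  refine ⟨fun h t ht htl => h.2 t ht (htl.trans (l.prefix_append _)) ?_, fun h => ?_⟩
  · simpa using Nat.lt_succ_of_le htl.length_le
  · refine ⟨by simp, fun t ht htl hlen => h t ht ?_⟩
    exact List.prefix_of_prefix_length_le htl (l.prefix_append _) (by simpa using hlen)

lemma isPath_append_singleton_iff_of_ne_nil {l : List ℤ} (hl : l ≠ []) (x : ℤ) :
    IsPath q (l ++ [x]) ↔ IsPath q l ∧ cf q l ≠ 0 := by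
  rw [isPath_append_singleton_iff]
  refine ⟨fun h => ⟨⟨hl, fun t ht htl _ => h t ht htl⟩, h l hl (List.prefix_refl l)⟩,
    fun ⟨hp, h0⟩ t ht htl => ?_⟩
  rcases htl.length_le.lt_or_eq with hlen | hlen
  · exact hp.2 t ht htl hlen
  · rwa [htl.eq_of_length hlen]

lemma isPath_singleton (x : ℤ) : IsPath q [x] :=
  isPath_append_singleton_iff (l := []).mpr fun _ ht htl => absurd (List.prefix_nil.mp htl) ht

lemma cf_append_zero_ne_zero (hq : q ≠ 0) {l : List ℤ} {x : ℤ} (hl : IsPath q (l ++ [x]))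
    (hne : l ≠ []) : cf q (l ++ [0]) ≠ 0 := by
  rw [cf_append_zero hne]
  exact inv_ne_zero (mul_ne_zero hq ((isPath_append_singleton_iff_of_ne_nil hne x).mp hl).2)

lemma isProper_append_singleton_iff {l : List ℤ} {x : ℤ} :
    IsProper (l ++ [x]) ↔ ∀ y ∈ l, y ≠ 0 := by
  refine ⟨fun h y hy => ?_, fun h i hi => ?_⟩
  · obtain ⟨i, hi, rfl⟩ := List.getElem_of_mem hy
    have := h i (by simpa)
    rwa [List.getD_append _ _ _ _ hi, List.getD_eq_getElem _ _ hi] at this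
  · have hi : i < l.length := by simpa using hi
    rw [List.getD_append _ _ _ _ hi, List.getD_eq_getElem _ _ hi]
    exact h _ (List.getElem_mem hi)

lemma isProper_of_forall_ne_zero {l : List ℤ} (h : ∀ y ∈ l, y ≠ 0) : IsProper l := by
  rcases l.eq_nil_or_concat' with rfl | ⟨L, b, rfl⟩
  · simp [IsProper]
  · exact isProper_append_singleton_iff.mpr fun y hy => h y (by simp [hy])

def negReverse (l : List ℤ) : List ℤ := (l.map (- ·)).reverse

lemma isLoop_append_negReverse (hq : q ≠ 0) {s B : List ℤ} {b : ℤ} (hs : IsPath q s)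
    (hB : IsPath q (B ++ [b])) (h : cf q s + b = cf q (B ++ [b])) :
    IsLoop q (s ++ negReverse B) := by
  induction B using List.reverseRecOn generalizing s b with
  | nil => exact ⟨by simpa [negReverse] using hs, by simpa [negReverse, cf_singleton] using h⟩
  | append_singleton B c ih =>
    have hB' := isPath_append_singleton_iff.mp hB
    have hc : cf q (B ++ [c]) ≠ 0 := hB' _ (by simp) (List.prefix_refl _)
    have hcfs : cf q s = (q * cf q (B ++ [c]))⁻¹ := by
      rw [cf_append_singleton _ b, cf_append_zero (by simp)] at h
      linarith
    have hs0 : cf q s ≠ 0 := by rw [hcfs]; exact inv_ne_zero (mul_ne_zero hq hc)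
    have hstep : cf q (s ++ [-c]) + ((0 : ℤ) : ℝ) = cf q (B ++ [0]) := by
      rw [cf_append_singleton s, cf_append_zero hs.1, hcfs, cf_append_singleton B c]
      field_simp
      push_cast
      ring
    have hpath : IsPath q (B ++ [0]) := isPath_append_singleton_iff.mpr
      fun t ht htl => hB' t ht (htl.trans (B.prefix_append _))
    simpa [negReverse] using
      ih ((isPath_append_singleton_iff_of_ne_nil hs.1 _).mpr ⟨hs, hs0⟩) hpath hstep

lemma reflTransGen_skipStep_cancel (s : List ℤ) (x y : ℤ) (C v : List ℤ) :
    ReflTransGen SkipStep (s ++ x :: (negReverse C ++ 0 :: (C ++ y :: v))) (s ++ (x + y) :: v) := by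
  induction C generalizing s x with
  | nil => exact .single ⟨s, v, x, y, by simp [negReverse], rfl⟩
  | cons c C ih =>
    refine .head ⟨s ++ x :: negReverse C, C ++ y :: v, -c, c, by simp [negReverse], ?_⟩ (ih s x)
    simp

lemma comp_append_singleton_cons (l t : List ℤ) (x c : ℤ) :
    comp (l ++ [x]) (c :: t) = l ++ (x + c) :: t := by
  simp [comp]

lemma reflTransGen_skipStep_comp_negReverse (s B : List ℤ) (x y : ℤ) :
    ReflTransGen SkipStep (comp (s ++ x :: negReverse B) (B ++ [y])) (s ++ [x + y]) := by
  cases B with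
  | nil =>
    convert ReflTransGen.refl
    simp [comp, negReverse]
  | cons c C =>
    convert reflTransGen_skipStep_cancel s x y C [] using 2
    rw [show s ++ x :: negReverse (c :: C) = (s ++ x :: negReverse C) ++ [-c] by simp [negReverse],
      List.cons_append, comp_append_singleton_cons]
    simp

lemma comp_zero_left {n : List ℤ} (hn : n ≠ []) : comp [0] n = n := by
  cases n with
  | nil => exact absurd rfl hn
  | cons c t => simp [comp]

lemma comp_append_singleton (u : List ℤ) {B : List ℤ} (hB : B ≠ []) (b : ℤ) :
    comp u (B ++ [b]) = comp u B ++ [b] := by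
  cases B with
  | nil => exact absurd rfl hB
  | cons c t => simp [comp]

lemma SkipStep.append_singleton {l l' : List ℤ} (h : SkipStep l l') (c : ℤ) :
    SkipStep (l ++ [c]) (l' ++ [c]) := by
  obtain ⟨u, v, x, y, rfl, rfl⟩ := h
  exact ⟨u, v ++ [c], x, y, by simp, by simp⟩

lemma isLoop_zero : IsLoop q [0] := ⟨isPath_singleton 0, by simp [cf_singleton]⟩

lemma eq_nil_and_eq_nil_or_cf_eq (hq : q ≠ 0) {A B : List ℤ} {a : ℤ}
    (hA : IsPath q (A ++ [a])) (hB : IsPath q (B ++ [a])) (h : cf q (A ++ [a]) = cf q (B ++ [a])) :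
    (A = [] ∧ B = []) ∨ (A ≠ [] ∧ B ≠ [] ∧ cf q A = cf q B) := by
  rw [cf_append_singleton A, cf_append_singleton B, add_right_inj] at h
  rcases eq_or_ne A [] with rfl | hA0 <;> rcases eq_or_ne B [] with rfl | hB0
  · exact .inl ⟨rfl, rfl⟩
  · exact (cf_append_zero_ne_zero hq hB hB0 (by simpa [cf_singleton] using h.symm)).elim
  · exact (cf_append_zero_ne_zero hq hA hA0 (by simpa [cf_singleton] using h)).elim
  · rw [cf_append_zero hA0, cf_append_zero hB0, inv_inj] at h
    exact .inr ⟨hA0, hB0, mul_left_cancel₀ hq h⟩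

lemma exists_loop_of_last_ne (hq : q ≠ 0) {A B : List ℤ} {a b : ℤ} (hab : a ≠ b)
    (hm : IsPath q (A ++ [a])) (hmp : IsProper (A ++ [a])) (hn : IsPath q (B ++ [b]))
    (hnp : IsProper (B ++ [b])) (h : cf q (A ++ [a]) = cf q (B ++ [b])) :
    ∃ u, IsLoop q u ∧ IsProper u ∧ ReflTransGen SkipStep (comp u (B ++ [b])) (A ++ [a]) ∧
      (u = [0] ↔ A ++ [a] = B ++ [b]) := by
  refine ⟨A ++ (a - b) :: negReverse B, ?_, ?_, ?_, ?_⟩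
  · have hs : IsPath q (A ++ [a - b]) :=
      isPath_append_singleton_iff.mpr (isPath_append_singleton_iff.mp hm)
    have hcf : cf q (A ++ [a - b]) + b = cf q (B ++ [b]) := by
      rw [← h, cf_append_singleton A, cf_append_singleton A a]
      push_cast
      ring
    simpa using isLoop_append_negReverse hq hs hn hcf
  · refine isProper_of_forall_ne_zero fun y hy => ?_
    simp only [negReverse, List.mem_append, List.mem_cons, List.mem_reverse, List.mem_map] at hy
    rcases hy with hy | rfl | ⟨z, hz, rfl⟩
    · exact isProper_append_singleton_iff.mp hmp y hy
    · exact sub_ne_zero.mpr hab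
    · simpa using isProper_append_singleton_iff.mp hnp z hz
  · simpa using reflTransGen_skipStep_comp_negReverse A B (a - b) b
  · refine iff_of_false (fun hu => sub_ne_zero.mpr hab ?_) (fun he => hab ?_)
    · exact List.mem_singleton.mp (hu ▸ List.mem_append_right A List.mem_cons_self)
    · simpa using congrArg List.getLast? he

end

theorem stmt5 (q : ℝ) (hq : 0 < q) (m n : List ℤ)
    (hm : IsPath q m) (hmp : IsProper m) (hn : IsPath q n) (hnp : IsProper n)
    (h : cf q m = cf q n) :
    ∃ u : List ℤ, IsLoop q u ∧ IsProper u ∧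
      Relation.ReflTransGen SkipStep (comp u n) m ∧ (u = [0] ↔ m = n) := by
  induction n using List.reverseRecOn generalizing m with
  | nil => exact absurd rfl hn.1
  | append_singleton B b ih =>
    obtain ⟨A, a, rfl⟩ := (m.eq_nil_or_concat').resolve_left hm.1
    rcases ne_or_eq a b with hab | rfl
    · exact exists_loop_of_last_ne hq.ne' hab hm hmp hn hnp h
    rcases eq_nil_and_eq_nil_or_cf_eq hq.ne' hm hn h with ⟨rfl, rfl⟩ | ⟨hA, hB, hAB⟩
    · exact ⟨[0], isLoop_zero, isProper_append_singleton_iff (l := []).mpr nofun,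
        by rw [comp_zero_left hn.1], iff_of_true rfl rfl⟩
    obtain ⟨u, hu, hup, hred, hu0⟩ := ih A
      ((isPath_append_singleton_iff_of_ne_nil hA a).mp hm).1
      (isProper_of_forall_ne_zero (isProper_append_singleton_iff.mp hmp))
      ((isPath_append_singleton_iff_of_ne_nil hB a).mp hn).1
      (isProper_of_forall_ne_zero (isProper_append_singleton_iff.mp hnp)) hAB
    refine ⟨u, hu, hup, ?_, hu0.trans (List.append_left_inj [a]).symm⟩
    rw [comp_append_singleton u hB]
    exact hred.lift (· ++ [a]) fun _ _ hs => hs.append_singleton a
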